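/- Let (A, m, k) be a finite local k-algebra with a self-dual finite A-module M (i.e., M ≅ M^∨ as A-modules), and let s be the largest integer with m^s M ≠ 0. For 0 ≤ δ ≤ s−2 and each i, the spaces Q(δ)_i = (m^i M ∩ (0:_M m^{s−i−δ+1})) / (m^{i+1}M ∩ (0:_M m^{s−i−δ+1}) + m^i M ∩ (0:_M m^{s−i−δ})) satisfy dim_k Q(δ)_i = dim_k Q(δ)_{s−δ−i}. -/

import Mathlib

/-- `(0 :_M J)`, the submodule of elements of `M` annihilated by the ideal `J`. -/
def torsIn {A M : Type*} [CommRing A] [AddCommGroup M] [Module A M] (J : Ideal A) :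
    Submodule A M where
  carrier := {x | ∀ a ∈ J, a • x = 0}
  add_mem' := by
    intro x y hx hy a ha
    rw [smul_add, hx a ha, hy a ha, add_zero]
  zero_mem' := by
    intro a _
    rw [smul_zero]
  smul_mem' := by
    intro c x hx a ha
    rw [← mul_smul, mul_comm, mul_smul, hx a ha, smul_zero]

/-- `dim_k Q(δ)_i` for a module `M` over a local algebra `(A, m, k)` of socle degree `s`:
the dimension of
`(m^i M ∩ (0:_M m^{s−i−δ+1})) / (m^{i+1}M ∩ (0:_M m^{s−i−δ+1}) + m^i M ∩ (0:_M m^{s−i−δ}))`,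
computed as a difference of `k`-dimensions (negative exponents truncated to `0`). -/
noncomputable def modDelta (k A M : Type*) [Field k] [CommRing A] [Algebra k A]
    [IsLocalRing A] [AddCommGroup M] [Module A M] [Module k M] [IsScalarTower k A M]
    (s δ i : ℕ) : ℕ :=
  let m : Ideal A := IsLocalRing.maximalIdeal A
  let tors : ℤ → Submodule A M := fun j => torsIn (m ^ j.toNat)
  Module.finrank k
      (((m ^ i • (⊤ : Submodule A M)) ⊓ tors ((s : ℤ) - i - δ + 1)).restrictScalars k) -
    Module.finrank k
      ((((m ^ (i + 1) • (⊤ : Submodule A M)) ⊓ tors ((s : ℤ) - i - δ + 1)) ⊔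
        ((m ^ i • (⊤ : Submodule A M)) ⊓ tors ((s : ℤ) - i - δ))).restrictScalars k)

/-
An `A`-balanced nondegenerate pairing makes `m^a M` and `(0 :_M m^a)` each other's orthogonal
(one inclusion is balancedness, equality is a dimension count). Put `j = s - δ - i`. Taking
orthogonals turns the numerator and denominator of `Q(δ)_i` into `(0 : m^i) + m^{j+1} M` and
`((0 : m^{i+1}) + m^{j+1} M) ∩ ((0 : m^i) + m^j M)`, so `dim Q(δ)_i` is the dimension of the
quotient of the latter by the former. By the dual Zassenhaus butterfly lemma this is the dimension
of `(m^j M ∩ (0 : m^{i+1})) / (m^{j+1} M ∩ (0 : m^{i+1}) + m^j M ∩ (0 : m^i))`, which is `Q(δ)_j`.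
-/

open Module

namespace Submodule

variable {K V : Type*} [DivisionRing K] [AddCommGroup V] [Module K V] [FiniteDimensional K V]

/-- Dimension form of the dual Zassenhaus (butterfly) lemma: the quotients
`((q ⊔ v) ⊓ (p ⊔ u)) / (p ⊔ v)` and `(u ⊓ q) / ((v ⊓ q) ⊔ (u ⊓ p))` have the same dimension. -/
theorem finrank_butterfly {p q u v : Submodule K V} (hpq : p ≤ q) (hvu : v ≤ u) :
    finrank K ↥((q ⊔ v) ⊓ (p ⊔ u)) + finrank K ↥((v ⊓ q) ⊔ (u ⊓ p)) =
      finrank K ↥(u ⊓ q) + finrank K ↥(p ⊔ v) := by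
  have hsup : (q ⊔ v) ⊔ (p ⊔ u) = q ⊔ u :=
    le_antisymm (sup_le (sup_le_sup_left hvu q) (sup_le_sup_right hpq u))
      (sup_le_sup le_sup_left le_sup_right)
  have hinf : (v ⊓ q) ⊓ (u ⊓ p) = v ⊓ p :=
    le_antisymm (inf_le_inf inf_le_left inf_le_right)
      (le_inf (inf_le_inf_left v hpq) (inf_le_inf_right p hvu))
  have h₁ := finrank_sup_add_finrank_inf_eq (q ⊔ v) (p ⊔ u)
  have h₂ := finrank_sup_add_finrank_inf_eq (v ⊓ q) (u ⊓ p)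
  have h₃ := finrank_sup_add_finrank_inf_eq q u
  have h₄ := finrank_sup_add_finrank_inf_eq q v
  have h₅ := finrank_sup_add_finrank_inf_eq p u
  have h₆ := finrank_sup_add_finrank_inf_eq p v
  rw [hsup] at h₁
  rw [hinf] at h₂
  rw [inf_comm q v] at h₄
  rw [inf_comm p u] at h₅
  rw [inf_comm p v] at h₆
  rw [inf_comm u q]
  omega

end Submodule

namespace LinearMap.BilinForm

theorem orthogonal_sup {R M : Type*} [CommSemiring R] [AddCommMonoid M] [Module R M]
    (B : LinearMap.BilinForm R M) (N P : Submodule R M) :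
    B.orthogonal (N ⊔ P) = B.orthogonal N ⊓ B.orthogonal P := by
  refine le_antisymm (le_inf (orthogonal_le le_sup_left) (orthogonal_le le_sup_right)) ?_
  rintro y ⟨hyN, hyP⟩ x hx
  obtain ⟨a, ha, b, hb, rfl⟩ := Submodule.mem_sup.mp hx
  change B (a + b) y = 0
  rw [map_add, LinearMap.add_apply, hyN a ha, hyP b hb, add_zero]

variable {K V : Type*} [Field K] [AddCommGroup V] [Module K V] [FiniteDimensional K V]
  {B : LinearMap.BilinForm K V}

theorem orthogonal_inf (hB : B.Nondegenerate) (N P : Submodule K V) :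
    B.orthogonal (N ⊓ P) = B.orthogonal N ⊔ B.orthogonal P := by
  refine (Submodule.eq_of_le_of_finrank_le
    (sup_le (orthogonal_le inf_le_left) (orthogonal_le inf_le_right)) ?_).symm
  have h₁ := Submodule.finrank_sup_add_finrank_inf_eq N P
  have h₂ := Submodule.finrank_sup_add_finrank_inf_eq (B.orthogonal N) (B.orthogonal P)
  rw [← orthogonal_sup] at h₂
  have := Submodule.finrank_le (N ⊔ P)
  have := Submodule.finrank_le N
  have := Submodule.finrank_le P
  simp only [finrank_orthogonal hB] at h₂ ⊢
  omega

theorem finrank_layer_symm (hB : B.Nondegenerate) {I P : ℕ → Submodule K V}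
    (hIP : ∀ a, B.orthogonal (I a) = P a) (hPI : ∀ a, B.orthogonal (P a) = I a)
    (hI : ∀ a, I (a + 1) ≤ I a) (i j : ℕ) :
    finrank K ↥(I i ⊓ P (j + 1)) - finrank K ↥(I (i + 1) ⊓ P (j + 1) ⊔ I i ⊓ P j) =
      finrank K ↥(I j ⊓ P (i + 1)) - finrank K ↥(I (j + 1) ⊓ P (i + 1) ⊔ I j ⊓ P i) := by
  have hP : P i ≤ P (i + 1) := by
    rw [← hIP, ← hIP]
    exact orthogonal_le (hI i)
  have hbutterfly := Submodule.finrank_butterfly hP (hI j)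
  have hN := finrank_orthogonal hB (I i ⊓ P (j + 1))
  have hD := finrank_orthogonal hB (I (i + 1) ⊓ P (j + 1) ⊔ I i ⊓ P j)
  rw [orthogonal_inf hB, hIP, hPI] at hN
  rw [orthogonal_sup, orthogonal_inf hB, orthogonal_inf hB, hIP, hIP, hPI, hPI] at hD
  have := Submodule.finrank_le (I i ⊓ P (j + 1))
  have := Submodule.finrank_le (I (i + 1) ⊓ P (j + 1) ⊔ I i ⊓ P j)
  omega

end LinearMap.BilinForm

section Duality

variable {k A M : Type*} [Field k] [CommRing A] [Algebra k A] [AddCommGroup M] [Module A M]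
  [Module k M] [IsScalarTower k A M] {B : LinearMap.BilinForm k M}

theorem orthogonal_smul_top_eq_torsIn (hB : ∀ (a : A) (x y : M), B (a • x) y = B x (a • y))
    (hnd : B.Nondegenerate) (J : Ideal A) :
    B.orthogonal ((J • ⊤ : Submodule A M).restrictScalars k) = (torsIn J).restrictScalars k := by
  ext y
  simp only [LinearMap.BilinForm.mem_orthogonal_iff, Submodule.restrictScalars_mem]
  constructor
  · intro hy a ha
    refine hnd.2 _ fun x => ?_
    rw [← hB]
    exact hy _ (Submodule.smul_mem_smul ha Submodule.mem_top)
  · intro hy x hx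
    refine Submodule.smul_induction_on hx (fun a ha x _ => ?_) (fun x₁ x₂ h₁ h₂ => ?_)
    · rw [hB, hy a ha, map_zero]
    · rw [map_add, LinearMap.add_apply, h₁, h₂, add_zero]

theorem orthogonal_torsIn_eq_smul_top [FiniteDimensional k M]
    (hB : ∀ (a : A) (x y : M), B (a • x) y = B x (a • y)) (hnd : B.Nondegenerate) (J : Ideal A) :
    B.orthogonal ((torsIn J : Submodule A M).restrictScalars k) =
      (J • ⊤ : Submodule A M).restrictScalars k := by
  have hle : (J • ⊤ : Submodule A M).restrictScalars k ≤
      B.orthogonal ((torsIn J : Submodule A M).restrictScalars k) := by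
    intro y hy
    refine Submodule.smul_induction_on (p := (· ∈ B.orthogonal _))
      ((Submodule.restrictScalars_mem k _ _).mp hy) (fun a ha y _ x hx => ?_) fun _ _ => add_mem
    change B x (a • y) = 0
    rw [← hB, hx a ha, map_zero, LinearMap.zero_apply]
  refine (Submodule.eq_of_le_of_finrank_le hle ?_).symm
  rw [LinearMap.BilinForm.finrank_orthogonal hnd, ← orthogonal_smul_top_eq_torsIn hB hnd,
    LinearMap.BilinForm.finrank_orthogonal hnd]
  omega

end Duality

open IsLocalRing in
theorem modDelta_eq {k A M : Type*} [Field k] [CommRing A] [Algebra k A] [IsLocalRing A]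
    [AddCommGroup M] [Module A M] [Module k M] [IsScalarTower k A M] {s δ i j : ℕ}
    (h : i + j + δ = s) :
    modDelta k A M s δ i =
      finrank k ↥((maximalIdeal A ^ i • ⊤ : Submodule A M).restrictScalars k ⊓
        (torsIn (maximalIdeal A ^ (j + 1))).restrictScalars k) -
      finrank k ↥((maximalIdeal A ^ (i + 1) • ⊤ : Submodule A M).restrictScalars k ⊓
          (torsIn (maximalIdeal A ^ (j + 1))).restrictScalars k ⊔
        (maximalIdeal A ^ i • ⊤ : Submodule A M).restrictScalars k ⊓
          (torsIn (maximalIdeal A ^ j)).restrictScalars k) := by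
  have e₁ : ((s : ℤ) - i - δ + 1).toNat = j + 1 := by omega
  have e₂ : ((s : ℤ) - i - δ).toNat = j := by omega
  simp only [modDelta]
  beta_reduce
  rw [e₁, e₂, Submodule.restrictScalars_sup]
  rfl

theorem selfdual_module_delta_symmetric_general {k A M : Type*} [Field k]
    [CommRing A] [Algebra k A] [IsLocalRing A]
    [AddCommGroup M] [Module A M] [Module k M] [IsScalarTower k A M]
    [FiniteDimensional k M]
    (φ : M →ₗ[k] (M →ₗ[k] k))
    (hbij : Function.Bijective φ)
    (hAlin : ∀ (a : A) (x y : M), φ (a • x) y = φ x (a • y))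
    (s : ℕ)
    (δ : ℕ) (hδ : δ + 2 ≤ s) (i : ℕ) (hi : i ≤ s - δ) :
    modDelta k A M s δ i = modDelta k A M s δ (s - δ - i) := by
  have hnd : φ.Nondegenerate := LinearMap.BilinForm.nondegenerate_iff_ker_eq_bot.mpr
    (LinearMap.ker_eq_bot.mpr hbij.injective)
  obtain ⟨j, rfl⟩ : ∃ j, s = i + j + δ := ⟨s - δ - i, by omega⟩
  rw [show i + j + δ - δ - i = j by omega, modDelta_eq rfl,
    modDelta_eq (i := j) (j := i) (by omega)]
  exact LinearMap.BilinForm.finrank_layer_symm hnd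
    (I := fun a => (IsLocalRing.maximalIdeal A ^ a • ⊤ : Submodule A M).restrictScalars k)
    (P := fun a => (torsIn (IsLocalRing.maximalIdeal A ^ a)).restrictScalars k)
    (fun _ => orthogonal_smul_top_eq_torsIn hAlin hnd _)
    (fun _ => orthogonal_torsIn_eq_smul_top hAlin hnd _)
    (fun a => Submodule.restrictScalars_mono k
      (Submodule.smul_mono_left (Ideal.pow_le_pow_right a.le_succ))) i j

/-- let `(A, m, k)` be a finite local `k`-algebra and `M` a self-dual
finite `A`-module (`M ≅ M^∨` as `A`-modules, the dual carrying the contraction action),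
with `s` the largest integer such that `m^s M ≠ 0`. Then for `0 ≤ δ ≤ s − 2` the graded
pieces `Q(δ)_i` satisfy `dim_k Q(δ)_i = dim_k Q(δ)_{s−δ−i}`. -/
theorem selfdual_module_delta_symmetric {k A M : Type*} [Field k] (h2 : (2 : k) ≠ 0)
    [CommRing A] [Algebra k A] [FiniteDimensional k A] [IsLocalRing A]
    [AddCommGroup M] [Module A M] [Module k M] [IsScalarTower k A M]
    [FiniteDimensional k M]
    (φ : M →ₗ[k] (M →ₗ[k] k))
    (hbij : Function.Bijective φ)
    (hAlin : ∀ (a : A) (x y : M), φ (a • x) y = φ x (a • y))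
    (s : ℕ)
    (hs : (IsLocalRing.maximalIdeal A) ^ s • (⊤ : Submodule A M) ≠ ⊥)
    (hs' : (IsLocalRing.maximalIdeal A) ^ (s + 1) • (⊤ : Submodule A M) = ⊥)
    (δ : ℕ) (hδ : δ + 2 ≤ s) (i : ℕ) (hi : i ≤ s - δ) :
    modDelta k A M s δ i = modDelta k A M s δ (s - δ - i) :=
  selfdual_module_delta_symmetric_general φ hbij hAlin s δ hδ i hi
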